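/- Let P ⊆ ℝ^k be a polytope of dimension l, a ∈ P an interior point whose coordinate vector has rank l over ℚ (i.e. the ℚ-affine span of a in ℝ^k has dimension l within P). Given any finite decomposition P = ∪_s P_s into finitely many rational polytopes, there exists an index s such that a lies in the interior of P_s. -/
import Mathlib


/-- An irrational point (coordinates together with `1` are `ℚ`-linearly independent)
of a set `P` covered by finitely many rational polytopes lies in the (topological)
interior of one of the chambers. -/
theorem irrational_point_in_chamber_interior (k m : ℕ)
    (P : Set (Fin k → ℝ)) (Ps : Fin m → Set (Fin k → ℝ))
    (hrat : ∀ s : Fin m, ∃ (n : ℕ) (c : Fin n → Fin k → ℚ) (b : Fin n → ℚ),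
      Ps s = {x : Fin k → ℝ | ∀ i, ∑ j, (c i j : ℝ) * x j ≤ (b i : ℝ)})
    (hcover : P = ⋃ s, Ps s)
    (a : Fin k → ℝ) (ha : a ∈ P)
    (hirr : ∀ (c : Fin k → ℚ) (c₀ : ℚ),
      (∑ j, (c j : ℝ) * a j) + (c₀ : ℝ) = 0 → c = 0 ∧ c₀ = 0) :
    ∃ s : Fin m, a ∈ interior (Ps s) := by
  rw [hcover] at ha
  obtain ⟨s, hs⟩ := Set.mem_iUnion.mp ha
  refine ⟨s, ?_⟩
  obtain ⟨n, c, b, hPs⟩ := hrat s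
  rw [mem_interior_iff_mem_nhds, hPs]
  have hset : {x : Fin k → ℝ | ∀ i, ∑ j, (c i j : ℝ) * x j ≤ (b i : ℝ)} =
      ⋂ i, {x : Fin k → ℝ | ∑ j, (c i j : ℝ) * x j ≤ (b i : ℝ)} := by
    ext x; simp [Set.mem_iInter]
  rw [hset]
  refine Filter.iInter_mem.mpr fun i => ?_
  have hcont : Continuous fun x : Fin k → ℝ => ∑ j, (c i j : ℝ) * x j :=
    continuous_finset_sum _ fun j _ => continuous_const.mul (continuous_apply j)
  have hai : ∑ j, (c i j : ℝ) * a j ≤ (b i : ℝ) := by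
    rw [hPs] at hs; exact hs i
  rcases lt_or_eq_of_le hai with h | h
  · exact Filter.mem_of_superset ((isOpen_lt hcont continuous_const).mem_nhds h)
      fun x hx => le_of_lt (Set.mem_setOf_eq ▸ hx)
  · have h2 := hirr (c i) (-(b i)) (by push_cast; linarith)
    have hc0 : c i = 0 := h2.1
    have hb0 : b i = 0 := by have := h2.2; simpa using this
    have huniv : {x : Fin k → ℝ | ∑ j, (c i j : ℝ) * x j ≤ (b i : ℝ)} = Set.univ := by
      ext x; simp [hc0, hb0]
    rw [huniv]; exact Filter.univ_mem
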